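/- arXiv:2304.10425 — 2 statements merged into one kernel-verified Lean document; each statement's English description precedes it below -/
import Mathlib

section
/- Let f ∈ ℝ^n be a nonzero vector, n ≥ 1, and let λ, R, n be real numbers with n ≥ 3 an integer. Define A_{ijk} = (1/(n+2))[2R/((n−1)n) + λ] f_k δ_{ij} + (1/(n+2))(λ − R/(n−1))(f_j δ_{ik} + f_i δ_{jk}). Then ‖A‖² = Σ_{i,j,k} A_{ijk}² = [λ²/n + (2(n−1)/(n(n+2)))(R/(n−1) − λ)²] ‖f‖². -/
/-!
Writing `A i j k = a f_k δ_ij + b (f_j δ_ik + f_i δ_jk)`, each of the three terms has squared norm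
`n ‖f‖²` and each pairwise product contracts to `‖f‖²`, so
`‖A‖² = (n a² + (2n + 2) b² + 4ab) ‖f‖²`; substituting the values of `a` and `b` is then a
rational-function identity in `n`, `λ`, `R`.
-/

open Finset

theorem sum_sq_symmetric_delta_tensor {ι R : Type*} [Fintype ι] [DecidableEq ι] [CommRing R]
    (a b : R) (f : ι → R) :
    ∑ i, ∑ j, ∑ k, (a * f k * (if i = j then 1 else 0)
        + b * (f j * (if i = k then 1 else 0) + f i * (if j = k then 1 else 0))) ^ 2
      = (Fintype.card ι * a ^ 2 + (2 * Fintype.card ι + 2) * b ^ 2 + 4 * a * b)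
        * ∑ i, f i ^ 2 := by
  have expand : ∀ i j k : ι, (a * f k * (if i = j then 1 else 0)
        + b * (f j * (if i = k then 1 else 0) + f i * (if j = k then 1 else 0))) ^ 2
      = (if i = j then a ^ 2 * f k ^ 2 else 0) + (if i = k then b ^ 2 * f j ^ 2 else 0)
        + (if j = k then b ^ 2 * f i ^ 2 else 0)
        + (if i = j then if i = k then 2 * a * b * f i ^ 2 else 0 else 0)
        + (if i = j then if j = k then 2 * a * b * f i ^ 2 else 0 else 0)
        + (if i = k then if j = k then 2 * b ^ 2 * f i ^ 2 else 0 else 0) := by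
    intro i j k
    split_ifs <;> subst_vars <;> ring
  simp only [expand, sum_add_distrib]
  simp [sum_ite_eq, sum_ite_eq', ← mul_sum]
  ring

theorem symmetric_delta_tensor_coeff_eq {K : Type*} [Field K] {n : K}
    (hn : n ≠ 0) (hn₁ : n - 1 ≠ 0) (hn₂ : n + 2 ≠ 0) {lam R a b : K}
    (ha : a = 1 / (n + 2) * (2 * R / ((n - 1) * n) + lam))
    (hb : b = 1 / (n + 2) * (lam - R / (n - 1))) :
    n * a ^ 2 + (2 * n + 2) * b ^ 2 + 4 * a * b
      = lam ^ 2 / n + 2 * (n - 1) / (n * (n + 2)) * (R / (n - 1) - lam) ^ 2 := by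
  subst ha hb
  field_simp
  ring

theorem norm_A_squared_general {n : ℕ} (hn : 3 ≤ n)
    (f : Fin n → ℝ) (lam R : ℝ)
    (A : Fin n → Fin n → Fin n → ℝ)
    (hA : ∀ i j k, A i j k =
      (1 / ((n : ℝ) + 2)) * (2 * R / (((n : ℝ) - 1) * n) + lam) * f k * (if i = j then 1 else 0)
        + (1 / ((n : ℝ) + 2)) * (lam - R / ((n : ℝ) - 1))
          * (f j * (if i = k then 1 else 0) + f i * (if j = k then 1 else 0))) :
    ∑ i, ∑ j, ∑ k, (A i j k) ^ 2
      = (lam ^ 2 / n + (2 * ((n : ℝ) - 1) / ((n : ℝ) * (n + 2)))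
          * (R / ((n : ℝ) - 1) - lam) ^ 2) * ∑ i, (f i) ^ 2 := by
  have hn₃ : (3 : ℝ) ≤ n := by exact_mod_cast hn
  simp only [hA]
  rw [sum_sq_symmetric_delta_tensor, Fintype.card_fin,
    symmetric_delta_tensor_coeff_eq (by positivity) (by linarith) (by positivity) rfl rfl]

theorem norm_A_squared {n : ℕ} (hn : 3 ≤ n)
    (f : Fin n → ℝ) (hf : f ≠ 0) (lam R : ℝ)
    (A : Fin n → Fin n → Fin n → ℝ)
    (hA : ∀ i j k, A i j k =
      (1 / ((n : ℝ) + 2)) * (2 * R / (((n : ℝ) - 1) * n) + lam) * f k * (if i = j then 1 else 0)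
        + (1 / ((n : ℝ) + 2)) * (lam - R / ((n : ℝ) - 1))
          * (f j * (if i = k then 1 else 0) + f i * (if j = k then 1 else 0))) :
    ∑ i, ∑ j, ∑ k, (A i j k) ^ 2
      = (lam ^ 2 / n + (2 * ((n : ℝ) - 1) / ((n : ℝ) * (n + 2)))
          * (R / ((n : ℝ) - 1) - lam) ^ 2) * ∑ i, (f i) ^ 2 :=
  norm_A_squared_general hn f lam R A hA
end

section
/- With notation as in the previous context (W with Weyl symmetries, f ∈ ℝ^n, B_{ijk} = −(1/3)(f_l W_{lijk} − f_l W_{ljki})), one has ‖B‖² = Σ_{i,j,k} B_{ijk}² = (1/3) Σ_{p,q,i,j,k} f_p W_{pijk} W_{qijk} f_q. -/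
/-!
With `A i j k = ∑ l, f l * W l i j k` one has `B i j k = -(A i j k - A j k i) / 3`, and `A`
inherits the first Bianchi identity. Multiplying that identity by `A i j k` and summing, the two
mixed terms agree after a cyclic relabelling of `(i, j, k)`, so `2 ∑ A i j k * A j k i = -∑ A²`.
Hence `∑ (A i j k - A j k i)² = 3 ∑ A²`, i.e. `‖B‖² = ∑ A² / 3`, which is the right-hand side.
-/

open Finset

section CyclicSums

variable {ι R : Type*} [Fintype ι] [CommRing R]

theorem sum_sum_sum_cyclic (g : ι → ι → ι → R) :
    ∑ i, ∑ j, ∑ k, g j k i = ∑ i, ∑ j, ∑ k, g i j k :=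
  sum_comm.trans (sum_congr rfl fun _ _ => sum_comm)

theorem two_mul_sum_mul_cyclic {T : ι → ι → ι → R}
    (hT : ∀ i j k, T i j k + T j k i + T k i j = 0) :
    2 * ∑ i, ∑ j, ∑ k, T i j k * T j k i = -∑ i, ∑ j, ∑ k, T i j k ^ 2 := by
  have hzero : ∑ i, ∑ j, ∑ k,
      (T i j k ^ 2 + T i j k * T j k i + T i j k * T k i j) = 0 :=
    sum_eq_zero fun i _ => sum_eq_zero fun j _ => sum_eq_zero fun k _ => by
      linear_combination T i j k * hT i j k
  have hrelabel :
      ∑ i, ∑ j, ∑ k, T i j k * T k i j = ∑ i, ∑ j, ∑ k, T i j k * T j k i := by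
    rw [← sum_sum_sum_cyclic]
    simp only [mul_comm]
  simp only [sum_add_distrib, hrelabel] at hzero
  linear_combination hzero

theorem sum_sq_sub_cyclic {T : ι → ι → ι → R}
    (hT : ∀ i j k, T i j k + T j k i + T k i j = 0) :
    ∑ i, ∑ j, ∑ k, (T i j k - T j k i) ^ 2 = 3 * ∑ i, ∑ j, ∑ k, T i j k ^ 2 := by
  have hsq : ∑ i, ∑ j, ∑ k, T j k i ^ 2 = ∑ i, ∑ j, ∑ k, T i j k ^ 2 :=
    sum_sum_sum_cyclic fun i j k => T i j k ^ 2
  simp only [sub_sq, sum_add_distrib, sum_sub_distrib, mul_assoc, ← mul_sum, hsq]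
  linear_combination -two_mul_sum_mul_cyclic hT

end CyclicSums

section Contraction

variable {ι κ R : Type*} [Fintype ι] [Fintype κ]

theorem sum_sum_sum_comm_left [AddCommMonoid R] (g : ι → ι → κ → R) :
    ∑ p, ∑ q, ∑ x, g p q x = ∑ x, ∑ p, ∑ q, g p q x :=
  (sum_congr rfl fun _ _ => sum_comm).trans sum_comm

theorem sum_sum_mul_mul_eq_sum_sq [CommRing R] (f : ι → R) (v : ι → κ → κ → κ → R) :
    ∑ p, ∑ q, ∑ i, ∑ j, ∑ k, f p * v p i j k * v q i j k * f q
      = ∑ i, ∑ j, ∑ k, (∑ p, f p * v p i j k) ^ 2 := by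
  simp only [sum_sum_sum_comm_left (ι := ι) (κ := κ), sq, sum_mul_sum]
  exact sum_congr rfl fun _ _ => sum_congr rfl fun _ _ => sum_congr rfl fun _ _ =>
    sum_congr rfl fun _ _ => sum_congr rfl fun _ _ => by ring

end Contraction

theorem norm_B_squared_general {n : ℕ}
    (W : Fin n → Fin n → Fin n → Fin n → ℝ)
    (hbianchi : ∀ p i j k, W p i j k + W p j k i + W p k i j = 0)
    (f : Fin n → ℝ)
    (B : Fin n → Fin n → Fin n → ℝ)
    (hB : ∀ i j k, B i j k = -(1 / 3) * ((∑ l, f l * W l i j k) - ∑ l, f l * W l j k i)) :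
    ∑ i, ∑ j, ∑ k, (B i j k) ^ 2
      = (1 / 3) * ∑ p, ∑ q, ∑ i, ∑ j, ∑ k, f p * W p i j k * W q i j k * f q := by
  set A : Fin n → Fin n → Fin n → ℝ := fun i j k => ∑ l, f l * W l i j k
  have hA : ∀ i j k, A i j k + A j k i + A k i j = 0 := fun i j k => by
    simp only [A, ← sum_add_distrib]
    exact sum_eq_zero fun l _ => by linear_combination f l * hbianchi l i j k
  have hBsq : ∀ i j k, B i j k ^ 2 = (1 / 9) * (A i j k - A j k i) ^ 2 := fun i j k => by
    rw [hB]; ring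
  simp only [hBsq, ← mul_sum, sum_sq_sub_cyclic hA, sum_sum_mul_mul_eq_sum_sq]
  ring

theorem norm_B_squared {n : ℕ}
    (W : Fin n → Fin n → Fin n → Fin n → ℝ)
    (hanti : ∀ p i j k, W p i j k = -W p i k j)
    (hbianchi : ∀ p i j k, W p i j k + W p j k i + W p k i j = 0)
    (hpair : ∀ p i j k, W p i j k = W j k p i)
    (f : Fin n → ℝ)
    (B : Fin n → Fin n → Fin n → ℝ)
    (hB : ∀ i j k, B i j k = -(1 / 3) * ((∑ l, f l * W l i j k) - ∑ l, f l * W l j k i)) :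
    ∑ i, ∑ j, ∑ k, (B i j k) ^ 2
      = (1 / 3) * ∑ p, ∑ q, ∑ i, ∑ j, ∑ k, f p * W p i j k * W q i j k * f q :=
  norm_B_squared_general W hbianchi f B hB
end
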